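/- For any n, m ≥ 2: μ_t(L(K_{m,n})) = max{n,m}, μ_d(L(K_{m,n})) = n + m − 1, and μ_o(L(K_{m,n})) = n + m − 2. -/

import Mathlib

/-!
By Palmer's theorem `L(K_{m,n})` is the rook's graph `K_m □ K_n` on the cells of an `m × n`
board, so all three numbers can be computed there. Two cells in a common line are adjacent;
two cells `p`, `q` in different rows and columns are at distance 2, and their shortest paths pass
through one of the two other corners `(p.1, q.2)`, `(q.1, p.2)` of the rectangle they span. Hence
`p`, `q` are `X`-visible iff one of these corners lies outside `X`.

* A total set contains no such pair (their two corners would not see each other), so it lies in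
  one line: `μ_t = max m n`.
* In a dual set, each such pair of `X` has exactly one of its two corners in `X` (if both were
  outside, these corners would not see each other). Three corners of a rectangle in `X` then force
  `X` into the cross of a row and a column, of size `m + n - 1`, which is itself a dual set.
* An outer set never contains three corners of a rectangle, whether or not the fourth one is in it.
  So a cell of `X` has no other cell of `X` in its row or none in its column. Unless `X` meets
  every row or every column at most once, counting the cells with a row-mate by their columns and
  the others by their rows misses a row and a column, giving `m + n - 2`: the size of a cross
  without its centre, which is an outer set.
-/

namespace MutualVisibility

open SimpleGraph

variable {V W : Type*}

/-- `x` and `y` are `X`-visible in `G`: there is a shortest `x,y`-path all of whose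
internal vertices avoid `X`. -/
def Visible (G : SimpleGraph V) (X : Set V) (x y : V) : Prop :=
  ∃ p : G.Walk x y, p.length = G.dist x y ∧ ∀ v ∈ p.support, v ≠ x → v ≠ y → v ∉ X

/-- `X` is a mutual-visibility set: any two vertices of `X` are `X`-visible. -/
def IsMutualVisSet (G : SimpleGraph V) (X : Set V) : Prop :=
  ∀ x ∈ X, ∀ y ∈ X, Visible G X x y

/-- outer mutual-visibility set -/
def IsOuterMutualVisSet (G : SimpleGraph V) (X : Set V) : Prop :=
  IsMutualVisSet G X ∧ ∀ x ∈ X, ∀ y ∉ X, Visible G X x y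

/-- dual mutual-visibility set -/
def IsDualMutualVisSet (G : SimpleGraph V) (X : Set V) : Prop :=
  IsMutualVisSet G X ∧ ∀ x ∉ X, ∀ y ∉ X, Visible G X x y

/-- total mutual-visibility set -/
def IsTotalMutualVisSet (G : SimpleGraph V) (X : Set V) : Prop :=
  ∀ x y : V, Visible G X x y

/-- mutual-visibility number μ(G) -/
noncomputable def mu (G : SimpleGraph V) : ℕ :=
  sSup {k | ∃ X : Set V, IsMutualVisSet G X ∧ X.ncard = k}

/-- outer mutual-visibility number μ_o(G) -/
noncomputable def muOuter (G : SimpleGraph V) : ℕ :=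
  sSup {k | ∃ X : Set V, IsOuterMutualVisSet G X ∧ X.ncard = k}

/-- dual mutual-visibility number μ_d(G) -/
noncomputable def muDual (G : SimpleGraph V) : ℕ :=
  sSup {k | ∃ X : Set V, IsDualMutualVisSet G X ∧ X.ncard = k}

/-- total mutual-visibility number μ_t(G) -/
noncomputable def muTotal (G : SimpleGraph V) : ℕ :=
  sSup {k | ∃ X : Set V, IsTotalMutualVisSet G X ∧ X.ncard = k}

/-- `H` contains a subgraph copy of `F`. -/
def ContainsCopy (F : SimpleGraph W) (H : SimpleGraph V) : Prop :=
  ∃ f : W → V, Function.Injective f ∧ ∀ a b, F.Adj a b → H.Adj (f a) (f b)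

/-- The Turán number ex(n; F): max number of edges of an `n`-vertex graph with no copy of `F`. -/
noncomputable def exNum (n : ℕ) (F : SimpleGraph W) : ℕ :=
  sSup {k | ∃ H : SimpleGraph (Fin n), ¬ ContainsCopy F H ∧ H.edgeSet.ncard = k}

/-- The direct (tensor/categorical) product of graphs. -/
def directProd (G : SimpleGraph V) (H : SimpleGraph W) : SimpleGraph (V × W) where
  Adj x y := G.Adj x.1 y.1 ∧ H.Adj x.2 y.2
  symm := ⟨fun _ _ h => ⟨h.1.symm, h.2.symm⟩⟩
  loopless := ⟨fun x h => G.irrefl h.1⟩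

/-- The join `G + H` of two graphs. -/
def graphJoin (G : SimpleGraph V) (H : SimpleGraph W) : SimpleGraph (V ⊕ W) where
  Adj u v := match u, v with
    | Sum.inl a, Sum.inl b => G.Adj a b
    | Sum.inr a, Sum.inr b => H.Adj a b
    | _, _ => True
  symm := ⟨fun u v => match u, v with
    | Sum.inl _, Sum.inl _ => fun h => G.adj_symm h
    | Sum.inr _, Sum.inr _ => fun h => H.adj_symm h
    | Sum.inl _, Sum.inr _ => fun _ => trivial
    | Sum.inr _, Sum.inl _ => fun _ => trivial⟩
  loopless := ⟨fun u => match u with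
    | Sum.inl _ => fun h => G.irrefl h
    | Sum.inr _ => fun h => H.irrefl h⟩

/-- A big-μ graph: `G = (K_1 ∪ K_t) + H` for some `t ≥ 0` and some graph `H`. -/
def IsBigMu {V : Type} (G : SimpleGraph V) : Prop :=
  ∃ (t : ℕ) (W : Type) (H : SimpleGraph W),
    Nonempty (G ≃g graphJoin ((⊤ : SimpleGraph (Fin 1)) ⊕g (⊤ : SimpleGraph (Fin t))) H)

/-- A cograph: a graph with no induced path on four vertices. -/
def IsCograph (G : SimpleGraph V) : Prop :=
  ¬ ∃ f : Fin 4 → V, Function.Injective f ∧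
      ∀ a b, (pathGraph 4).Adj a b ↔ G.Adj (f a) (f b)

/-- The Petersen graph, realized as the Kneser graph K(5,2). -/
def petersen : SimpleGraph {s : Finset (Fin 5) // s.card = 2} where
  Adj a b := Disjoint a.1 b.1
  symm := ⟨fun _ _ h => h.symm⟩
  loopless := by
    refine ⟨?_⟩
    rintro ⟨s, hs⟩ h
    rw [disjoint_self, Finset.bot_eq_empty] at h
    subst h
    simp at hs

section Graph

variable {G : SimpleGraph V} {H : SimpleGraph W} {X : Set V} {x y : V}

theorem _root_.SimpleGraph.Hom.edist_map_le (f : G →g H) (u v : V) :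
    H.edist (f u) (f v) ≤ G.edist u v := by
  by_cases h : G.Reachable u v
  · obtain ⟨p, hp⟩ := h.exists_walk_length_eq_edist
    rw [← hp]
    exact (edist_le (p.map f)).trans (by simp)
  · simp [edist_eq_top_of_not_reachable h]

theorem _root_.SimpleGraph.Iso.edist_map (e : G ≃g H) (u v : V) :
    H.edist (e u) (e v) = G.edist u v :=
  le_antisymm (e.toHom.edist_map_le u v) (by simpa using e.symm.toHom.edist_map_le (e u) (e v))

theorem _root_.SimpleGraph.Iso.dist_map (e : G ≃g H) (u v : V) :
    H.dist (e u) (e v) = G.dist u v := by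
  rw [SimpleGraph.dist, SimpleGraph.dist, e.edist_map]

theorem Visible.refl : Visible G X x x :=
  ⟨.nil, by simp, by simp⟩

theorem Visible.of_adj (h : G.Adj x y) : Visible G X x y :=
  ⟨h.toWalk, by simp [dist_eq_one_iff_adj.2 h], by simp +contextual⟩

theorem visible_iff_of_dist_eq_two (h : G.dist x y = 2) :
    Visible G X x y ↔ ∃ z, G.Adj x z ∧ G.Adj z y ∧ z ∉ X := by
  constructor
  · rintro ⟨p, hp, hX⟩
    rw [h] at hp
    match p, hp with
    | .cons hxz (.cons hzy .nil), _ => exact ⟨_, hxz, hzy, hX _ (by simp) hxz.ne' hzy.ne⟩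
  · rintro ⟨z, hxz, hzy, hz⟩
    refine ⟨.cons hxz (.cons hzy .nil), by simp [h], ?_⟩
    simp only [Walk.support_cons, Walk.support_nil, List.mem_cons, List.not_mem_nil, or_false]
    rintro v (rfl | rfl | rfl) hvx hvy <;> simp_all

theorem Visible.map_iso (e : G ≃g H) (h : Visible G X x y) :
    Visible H (e.symm ⁻¹' X) (e x) (e y) := by
  obtain ⟨p, hp, hX⟩ := h
  refine ⟨p.map e.toHom, by simp [hp, e.dist_map], ?_⟩
  simp only [Walk.support_map, List.mem_map, forall_exists_index, and_imp,
    forall_apply_eq_imp_iff₂]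
  intro v hv hvx hvy
  simpa using hX v hv (fun h => hvx (by simp [h])) (fun h => hvy (by simp [h]))

theorem sSup_ncard_congr (e : V ≃ W) {P : Set V → Prop} {Q : Set W → Prop}
    (h : ∀ Y, P (e ⁻¹' Y) ↔ Q Y) :
    sSup {k | ∃ X, P X ∧ X.ncard = k} = sSup {k | ∃ Y, Q Y ∧ Y.ncard = k} := by
  congr 1
  ext k
  constructor
  · rintro ⟨X, hX, rfl⟩
    refine ⟨e '' X, (h _).1 ?_, Set.ncard_image_of_injective X e.injective⟩
    rwa [e.preimage_image]
  · rintro ⟨Y, hY, rfl⟩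
    exact ⟨e ⁻¹' Y, (h Y).2 hY,
      Set.ncard_preimage_of_injective_subset_range e.injective (by simp)⟩

variable {Y : Set W}

theorem visible_preimage_iff (e : G ≃g H) :
    Visible G (e ⁻¹' Y) x y ↔ Visible H Y (e x) (e y) :=
  ⟨fun h => by simpa [Set.preimage_preimage] using h.map_iso e,
    fun h => by simpa [Set.preimage_preimage] using h.map_iso e.symm⟩

theorem isMutualVisSet_preimage_iff (e : G ≃g H) :
    IsMutualVisSet G (e ⁻¹' Y) ↔ IsMutualVisSet H Y := by
  simp only [IsMutualVisSet, e.surjective.forall, Set.mem_preimage, visible_preimage_iff]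

theorem isTotalMutualVisSet_preimage_iff (e : G ≃g H) :
    IsTotalMutualVisSet G (e ⁻¹' Y) ↔ IsTotalMutualVisSet H Y := by
  simp only [IsTotalMutualVisSet, e.surjective.forall, visible_preimage_iff]

theorem isDualMutualVisSet_preimage_iff (e : G ≃g H) :
    IsDualMutualVisSet G (e ⁻¹' Y) ↔ IsDualMutualVisSet H Y := by
  simp only [IsDualMutualVisSet, isMutualVisSet_preimage_iff, e.surjective.forall,
    Set.mem_preimage, visible_preimage_iff]

theorem isOuterMutualVisSet_preimage_iff (e : G ≃g H) :
    IsOuterMutualVisSet G (e ⁻¹' Y) ↔ IsOuterMutualVisSet H Y := by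
  simp only [IsOuterMutualVisSet, isMutualVisSet_preimage_iff, e.surjective.forall,
    Set.mem_preimage, visible_preimage_iff]

theorem muTotal_eq_of_iso (e : G ≃g H) : muTotal G = muTotal H :=
  sSup_ncard_congr e.toEquiv fun _ => isTotalMutualVisSet_preimage_iff e

theorem muDual_eq_of_iso (e : G ≃g H) : muDual G = muDual H :=
  sSup_ncard_congr e.toEquiv fun _ => isDualMutualVisSet_preimage_iff e

theorem muOuter_eq_of_iso (e : G ≃g H) : muOuter G = muOuter H :=
  sSup_ncard_congr e.toEquiv fun _ => isOuterMutualVisSet_preimage_iff e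

end Graph

abbrev rookGraph (α β : Type*) : SimpleGraph (α × β) :=
  (⊤ : SimpleGraph α) □ (⊤ : SimpleGraph β)

noncomputable def rookGraphIsoLineGraph (α β : Type*) :
    rookGraph α β ≃g (completeBipartiteGraph α β).lineGraph where
  toEquiv := Equiv.ofBijective (fun p => ⟨s(.inl p.1, .inr p.2), by simp⟩) <| by
    refine ⟨fun p q h => by simpa [Prod.ext_iff] using h, ?_⟩
    rintro ⟨e, he⟩
    rw [edgeSet_completeBipartiteGraph] at he
    obtain ⟨p, rfl⟩ := he
    exact ⟨p, rfl⟩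
  map_rel_iff' := by
    intro p q
    change (completeBipartiteGraph α β).lineGraph.Adj ⟨s(.inl p.1, .inr p.2), _⟩
      ⟨s(.inl q.1, .inr q.2), _⟩ ↔ _
    simp [lineGraph_adj_iff_exists, Prod.ext_iff]
    tauto

section Rook

variable {α β : Type*} {X : Set (α × β)} {p q z : α × β}

theorem rookGraph_adj : (rookGraph α β).Adj p q ↔ p ≠ q ∧ (p.1 = q.1 ∨ p.2 = q.2) := by
  simp only [boxProd_adj, top_adj, ne_eq, Prod.ext_iff]
  tauto

theorem rookGraph_dist_eq_two (h₁ : p.1 ≠ q.1) (h₂ : p.2 ≠ q.2) :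
    (rookGraph α β).dist p q = 2 := by
  rw [SimpleGraph.dist, edist_boxProd, edist_top_of_ne h₁, edist_top_of_ne h₂]
  rfl

theorem rookGraph_adj_and_adj_iff (h₁ : p.1 ≠ q.1) (h₂ : p.2 ≠ q.2) :
    (rookGraph α β).Adj p z ∧ (rookGraph α β).Adj z q ↔ z = (p.1, q.2) ∨ z = (q.1, p.2) := by
  simp only [rookGraph_adj, ne_eq, Prod.ext_iff]
  grind

theorem rookGraph_visible_iff :
    Visible (rookGraph α β) X p q ↔
      p.1 = q.1 ∨ p.2 = q.2 ∨ (p.1, q.2) ∉ X ∨ (q.1, p.2) ∉ X := by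
  by_cases hl : p.1 = q.1 ∨ p.2 = q.2
  · obtain rfl | hne := eq_or_ne p q
    · simp [Visible.refl]
    · simp only [Visible.of_adj (rookGraph_adj.2 ⟨hne, hl⟩), true_iff]
      tauto
  · rw [not_or] at hl
    rw [visible_iff_of_dist_eq_two (rookGraph_dist_eq_two hl.1 hl.2)]
    simp only [← and_assoc, rookGraph_adj_and_adj_iff hl.1 hl.2, or_and_right, exists_or,
      exists_eq_left, hl.1, hl.2, false_or]

theorem isTotalMutualVisSet_rookGraph_iff :
    IsTotalMutualVisSet (rookGraph α β) X ↔ ∀ p ∈ X, ∀ q ∈ X, p.1 = q.1 ∨ p.2 = q.2 := by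
  simp only [IsTotalMutualVisSet, rookGraph_visible_iff]
  constructor
  · intro h p hp q hq
    have := h (p.1, q.2) (q.1, p.2)
    grind
  · intro h p q
    by_contra! hc
    have := h _ hc.2.2.1 _ hc.2.2.2
    grind

theorem subset_line_of_pairwise_collinear (h : ∀ p ∈ X, ∀ q ∈ X, p.1 = q.1 ∨ p.2 = q.2)
    (hp : p ∈ X) : X ⊆ {q | q.1 = p.1} ∨ X ⊆ {q | q.2 = p.2} := by
  by_contra! hX
  obtain ⟨⟨q, hq, hq₁⟩, ⟨r, hr, hr₂⟩⟩ := And.imp Set.not_subset.1 Set.not_subset.1 hX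
  have := h q hq r hr
  grind

theorem ncard_setOf_fst_eq [Finite β] (i : α) : {p : α × β | p.1 = i}.ncard = Nat.card β := by
  rw [← Set.ncard_range_of_injective (Prod.mk_right_injective i)]
  congr 1
  ext ⟨a, b⟩
  simp [eq_comm]

theorem ncard_setOf_snd_eq [Finite α] (j : β) : {p : α × β | p.2 = j}.ncard = Nat.card α := by
  rw [← Set.ncard_range_of_injective (Prod.mk_left_injective j)]
  congr 1
  ext ⟨a, b⟩
  simp [eq_comm]

theorem isTotalMutualVisSet_rookGraph_setOf_fst_eq (i : α) :
    IsTotalMutualVisSet (rookGraph α β) {p | p.1 = i} :=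
  isTotalMutualVisSet_rookGraph_iff.2 fun _ hp _ hq => Or.inl (hp.trans hq.symm)

theorem isTotalMutualVisSet_rookGraph_setOf_snd_eq (j : β) :
    IsTotalMutualVisSet (rookGraph α β) {p | p.2 = j} :=
  isTotalMutualVisSet_rookGraph_iff.2 fun _ hp _ hq => Or.inr (hp.trans hq.symm)

theorem IsTotalMutualVisSet.ncard_le_max [Finite α] [Finite β]
    (hX : IsTotalMutualVisSet (rookGraph α β) X) : X.ncard ≤ max (Nat.card α) (Nat.card β) := by
  obtain rfl | ⟨p, hp⟩ := X.eq_empty_or_nonempty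
  · simp
  rcases subset_line_of_pairwise_collinear (isTotalMutualVisSet_rookGraph_iff.1 hX) hp with
    h | h
  · exact (Set.ncard_le_ncard h).trans (by rw [ncard_setOf_fst_eq]; exact le_max_right _ _)
  · exact (Set.ncard_le_ncard h).trans (by rw [ncard_setOf_snd_eq]; exact le_max_left _ _)

theorem muTotal_rookGraph [Finite α] [Finite β] [Nonempty α] [Nonempty β] :
    muTotal (rookGraph α β) = max (Nat.card α) (Nat.card β) := by
  refine IsGreatest.csSup_eq ⟨?_, fun k ⟨X, hX, hk⟩ => hk ▸ hX.ncard_le_max⟩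
  obtain ⟨i⟩ := ‹Nonempty α›
  obtain ⟨j⟩ := ‹Nonempty β›
  rcases le_total (Nat.card α) (Nat.card β) with h | h
  · exact ⟨_, isTotalMutualVisSet_rookGraph_setOf_fst_eq i,
      by rw [ncard_setOf_fst_eq, max_eq_right h]⟩
  · exact ⟨_, isTotalMutualVisSet_rookGraph_setOf_snd_eq j,
      by rw [ncard_setOf_snd_eq, max_eq_left h]⟩

def rookCross (i : α) (j : β) : Set (α × β) := {p | p.1 = i ∨ p.2 = j}

theorem ncard_rookCross [Finite α] [Finite β] (i : α) (j : β) :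
    (rookCross i j).ncard = Nat.card α + Nat.card β - 1 := by
  have hinter : {p : α × β | p.1 = i} ∩ {p | p.2 = j} = {(i, j)} := by
    ext ⟨a, b⟩
    simp
  have := Set.ncard_union_add_ncard_inter {p : α × β | p.1 = i} {p | p.2 = j}
  rw [hinter, Set.ncard_singleton, ncard_setOf_fst_eq, ncard_setOf_snd_eq] at this
  rw [rookCross, Set.ofPred_or]
  omega

theorem isDualMutualVisSet_rookCross (i : α) (j : β) :
    IsDualMutualVisSet (rookGraph α β) (rookCross i j) := by
  constructor <;>
  · intro p hp q hq
    simp only [rookCross, rookGraph_visible_iff, Set.mem_ofPred_eq] at hp hq ⊢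
    grind

theorem IsDualMutualVisSet.corner_mem_iff (hX : IsDualMutualVisSet (rookGraph α β) X)
    (hp : p ∈ X) (hq : q ∈ X) (h₁ : p.1 ≠ q.1) (h₂ : p.2 ≠ q.2) :
    (p.1, q.2) ∈ X ↔ (q.1, p.2) ∉ X := by
  have hpq := hX.1 p hp q hq
  rw [rookGraph_visible_iff] at hpq
  refine ⟨by grind, fun hc => by_contra fun hc' => ?_⟩
  have := hX.2 _ hc' _ hc
  rw [rookGraph_visible_iff] at this
  grind

theorem IsDualMutualVisSet.subset_rookCross_of_three_corners {a c : α} {b d : β}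
    (hX : IsDualMutualVisSet (rookGraph α β) X) (hac : a ≠ c) (hbd : b ≠ d)
    (hab : (a, b) ∈ X) (had : (a, d) ∈ X) (hcd : (c, d) ∈ X) : X ⊆ rookCross a d := by
  have corner : ∀ {p q : α × β}, p ∈ X → q ∈ X → p.1 ≠ q.1 → p.2 ≠ q.2 →
      ((p.1, q.2) ∈ X ↔ (q.1, p.2) ∉ X) :=
    hX.corner_mem_iff
  rintro ⟨e, f⟩ hef
  by_contra! hout
  simp only [rookCross, Set.mem_ofPred_eq, not_or] at hout
  obtain ⟨hea, hfd⟩ := hout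
  by_cases hed : (e, d) ∈ X
  · have heb : (e, b) ∉ X := fun heb => (corner hed hab hea hbd.symm).1 heb had
    have hfb : f ≠ b := by rintro rfl; exact heb hef
    exact heb ((corner hef hab hea hfb).2 ((corner hef had hea hfd).1 hed))
  · have haf : (a, f) ∈ X := not_not.1 fun haf => hed ((corner hef had hea hfd).2 haf)
    have hec : e ≠ c := by rintro rfl; exact hed hcd
    exact hed ((corner hef hcd hec hfd).2 ((corner haf hcd hac hfd).1 had))

theorem IsDualMutualVisSet.exists_subset_rookCross (hX : IsDualMutualVisSet (rookGraph α β) X)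
    (hp : p ∈ X) : ∃ i j, X ⊆ rookCross i j := by
  by_cases hcol : ∀ p ∈ X, ∀ q ∈ X, p.1 = q.1 ∨ p.2 = q.2
  · refine ⟨p.1, p.2, ?_⟩
    rcases subset_line_of_pairwise_collinear hcol hp with h | h <;>
      exact h.trans fun q hq => by simp_all [rookCross]
  push Not at hcol
  obtain ⟨⟨a, b⟩, hab, ⟨c, d⟩, hcd, hac, hbd⟩ := hcol
  by_cases had : (a, d) ∈ X
  · exact ⟨a, d, hX.subset_rookCross_of_three_corners hac hbd hab had hcd⟩
  · have hcb : (c, b) ∈ X :=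
      by_contra fun hcb => had ((hX.corner_mem_iff hab hcd hac hbd).2 hcb)
    exact ⟨c, b, hX.subset_rookCross_of_three_corners hac.symm hbd.symm hcd hcb hab⟩

theorem IsDualMutualVisSet.ncard_le_card_add_card_sub_one [Finite α] [Finite β]
    (hX : IsDualMutualVisSet (rookGraph α β) X) : X.ncard ≤ Nat.card α + Nat.card β - 1 := by
  obtain rfl | ⟨p, hp⟩ := X.eq_empty_or_nonempty
  · simp
  obtain ⟨i, j, h⟩ := hX.exists_subset_rookCross hp
  exact ncard_rookCross i j ▸ Set.ncard_le_ncard h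

theorem muDual_rookGraph [Finite α] [Finite β] [Nonempty α] [Nonempty β] :
    muDual (rookGraph α β) = Nat.card α + Nat.card β - 1 := by
  refine IsGreatest.csSup_eq
    ⟨?_, fun k ⟨X, hX, hk⟩ => hk ▸ hX.ncard_le_card_add_card_sub_one⟩
  obtain ⟨i⟩ := ‹Nonempty α›
  obtain ⟨j⟩ := ‹Nonempty β›
  exact ⟨_, isDualMutualVisSet_rookCross i j, ncard_rookCross i j⟩

theorem ncard_rookCross_diff_singleton [Finite α] [Finite β] (i : α) (j : β) :
    (rookCross i j \ {(i, j)}).ncard = Nat.card α + Nat.card β - 2 := by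
  rw [Set.ncard_sdiff_singleton_of_mem (by simp [rookCross]), ncard_rookCross]
  omega

theorem isOuterMutualVisSet_rookCross_diff_singleton (i : α) (j : β) :
    IsOuterMutualVisSet (rookGraph α β) (rookCross i j \ {(i, j)}) := by
  suffices h : ∀ p ∈ rookCross i j \ {(i, j)}, ∀ q,
      Visible (rookGraph α β) (rookCross i j \ {(i, j)}) p q from
    ⟨fun p hp q _ => h p hp q, fun p hp q _ => h p hp q⟩
  intro p hp q
  simp only [rookCross, rookGraph_visible_iff, Set.mem_sdiff, Set.mem_ofPred_eq,
    Set.mem_singleton_iff, Prod.ext_iff] at hp ⊢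
  grind

theorem IsOuterMutualVisSet.eq_or_eq_of_fst_eq_of_snd_eq {r : α × β}
    (hX : IsOuterMutualVisSet (rookGraph α β) X) (hp : p ∈ X) (hq : q ∈ X) (hr : r ∈ X)
    (hpq : p.1 = q.1) (hpr : p.2 = r.2) : q = p ∨ r = p := by
  by_contra! hne
  -- the other two corners of the rectangle spanned by `p` and `(r.1, q.2)` are `q` and `r`
  have hvis : Visible (rookGraph α β) X p (r.1, q.2) := by
    by_cases hs : (r.1, q.2) ∈ X
    exacts [hX.1 p hp _ hs, hX.2 p hp _ hs]
  rw [rookGraph_visible_iff] at hvis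
  obtain ⟨p₁, p₂⟩ := p
  obtain ⟨q₁, q₂⟩ := q
  obtain ⟨r₁, r₂⟩ := r
  simp only [ne_eq, Prod.ext_iff] at hpq hpr hne hvis
  grind

theorem ncard_le_of_not_injOn [Finite α] [Finite β]
    (hX : ∀ p ∈ X, ∀ q ∈ X, ∀ r ∈ X, p.1 = q.1 → p.2 = r.2 → q = p ∨ r = p)
    (hfst : ¬ Set.InjOn Prod.fst X) (hsnd : ¬ Set.InjOn Prod.snd X) :
    X.ncard ≤ (Nat.card α - 1) + (Nat.card β - 1) := by
  simp only [Set.InjOn, not_forall] at hfst hsnd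
  obtain ⟨u, hu, v, hv, huv, hne⟩ := hfst
  obtain ⟨u', hu', v', hv', huv', hne'⟩ := hsnd
  set R := {p : α × β | ∃ q ∈ X, q.1 = p.1 ∧ q ≠ p}
  have hR : (X ∩ R).ncard ≤ Nat.card β - 1 := by
    calc (X ∩ R).ncard ≤ ({u'.2}ᶜ : Set β).ncard := by
          refine Set.ncard_le_ncard_of_injOn Prod.snd ?_ ?_
          · rintro p ⟨hp, q, hq, hqp, hqp'⟩ (hpu : p.2 = u'.2)
            have := hX p hp q hq u' hu' hqp.symm hpu
            have := hX p hp q hq v' hv' hqp.symm (hpu.trans huv')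
            grind
          · rintro p ⟨hp, q, hq, hqp, hqp'⟩ p' ⟨hp', -⟩ hpp'
            have := hX p hp q hq p' hp' hqp.symm hpp'
            grind
      _ = Nat.card β - 1 := by rw [Set.ncard_compl, Set.ncard_singleton]
  have hC : (X \ R).ncard ≤ Nat.card α - 1 := by
    calc (X \ R).ncard ≤ ({u.1}ᶜ : Set α).ncard := by
          refine Set.ncard_le_ncard_of_injOn Prod.fst ?_ ?_
          · rintro p ⟨hp, hpR⟩ (hpu : p.1 = u.1)
            exact hpR (by grind)
          · rintro p ⟨hp, hpR⟩ p' ⟨hp', -⟩ hpp'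
            by_contra h
            exact hpR ⟨p', hp', hpp'.symm, Ne.symm h⟩
      _ = Nat.card α - 1 := by rw [Set.ncard_compl, Set.ncard_singleton]
  rw [← Set.ncard_inter_add_ncard_sdiff_eq_ncard X R]
  omega

theorem IsOuterMutualVisSet.ncard_le_card_add_card_sub_two [Finite α] [Finite β]
    (hX : IsOuterMutualVisSet (rookGraph α β) X) (hα : 2 ≤ Nat.card α)
    (hβ : 2 ≤ Nat.card β) : X.ncard ≤ Nat.card α + Nat.card β - 2 := by
  by_cases hfst : Set.InjOn Prod.fst X
  · have := Set.ncard_le_ncard_of_injOn Prod.fst (fun _ _ => Set.mem_univ _) hfst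
    rw [Set.ncard_univ] at this
    omega
  by_cases hsnd : Set.InjOn Prod.snd X
  · have := Set.ncard_le_ncard_of_injOn Prod.snd (fun _ _ => Set.mem_univ _) hsnd
    rw [Set.ncard_univ] at this
    omega
  have := ncard_le_of_not_injOn
    (fun _ hp _ hq _ hr => hX.eq_or_eq_of_fst_eq_of_snd_eq hp hq hr) hfst hsnd
  omega

theorem muOuter_rookGraph [Finite α] [Finite β] (hα : 2 ≤ Nat.card α) (hβ : 2 ≤ Nat.card β) :
    muOuter (rookGraph α β) = Nat.card α + Nat.card β - 2 := by
  refine IsGreatest.csSup_eq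
    ⟨?_, fun k ⟨X, hX, hk⟩ => hk ▸ hX.ncard_le_card_add_card_sub_two hα hβ⟩
  obtain ⟨i⟩ : Nonempty α := Nat.card_pos_iff.1 (by omega) |>.1
  obtain ⟨j⟩ : Nonempty β := Nat.card_pos_iff.1 (by omega) |>.1
  exact ⟨_, isOuterMutualVisSet_rookCross_diff_singleton i j,
    ncard_rookCross_diff_singleton i j⟩

end Rook

theorem mv_numbers_lineGraph_complete_bipartite (n m : ℕ) (hn : 2 ≤ n) (hm : 2 ≤ m) :
    muTotal (completeBipartiteGraph (Fin m) (Fin n)).lineGraph = max n m ∧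
    muDual (completeBipartiteGraph (Fin m) (Fin n)).lineGraph = n + m - 1 ∧
    muOuter (completeBipartiteGraph (Fin m) (Fin n)).lineGraph = n + m - 2 := by
  have : NeZero m := ⟨by omega⟩
  have : NeZero n := ⟨by omega⟩
  have e := rookGraphIsoLineGraph (Fin m) (Fin n)
  rw [← muTotal_eq_of_iso e, ← muDual_eq_of_iso e, ← muOuter_eq_of_iso e, muTotal_rookGraph,
    muDual_rookGraph, muOuter_rookGraph (by simpa using hm) (by simpa using hn)]
  simp only [Nat.card_eq_fintype_card, Fintype.card_fin]
  exact ⟨max_comm m n, by omega, by omega⟩
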